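/- arXiv:math-ph/9903003 — 2 statements merged into one kernel-verified Lean document; each statement's English description precedes it below -/
import Mathlib

section
/- For bounded self-adjoint x and arbitrary bounded z, the commutator satisfies [e^{ix}, z] = i ∫_0^1 e^{itx} [x,z] e^{i(1-t)x} dt, and consequently ‖[e^{ix}, z]‖ ≤ ‖[x,z]‖. -/
/-!
Differentiating `t ↦ e^{ta} z e^{(1-t)a}` gives `e^{ta} [a,z] e^{(1-t)a}`, so the fundamental
theorem of calculus expresses `[e^a, z]` as the integral of this over `[0,1]`; this holds in any
real Banach algebra. For `a = ix` with `x` self-adjoint, `a` is skew-adjoint, so every `e^{ta}` is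
unitary and the integrand has norm exactly `‖[a,z]‖ = ‖[x,z]‖`.
-/

open Complex NormedSpace intervalIntegral

section RealBanachAlgebra

variable {𝔸 : Type*} [NormedRing 𝔸] [NormedAlgebra ℝ 𝔸] [CompleteSpace 𝔸]

theorem hasDerivAt_exp_smul_mul_mul_exp_one_sub_smul (a z : 𝔸) (t : ℝ) :
    HasDerivAt (fun s : ℝ => exp (s • a) * z * exp ((1 - s) • a))
      (exp (t • a) * (a * z - z * a) * exp ((1 - t) • a)) t := by
  have hright :
      HasDerivAt (fun s : ℝ => exp ((1 - s) • a)) ((-1 : ℝ) • (a * exp ((1 - t) • a))) t :=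
    (hasDerivAt_exp_smul_const' a (1 - t)).scomp t ((hasDerivAt_id t).const_sub 1)
  refine (((hasDerivAt_exp_smul_const a t).mul_const z).mul hright).congr_deriv ?_
  rw [neg_one_smul]
  noncomm_ring

theorem exp_mul_sub_mul_exp_eq_integral (a z : 𝔸) :
    exp a * z - z * exp a =
      ∫ t in (0 : ℝ)..1, exp (t • a) * (a * z - z * a) * exp ((1 - t) • a) := by
  let +nondep : NormedAlgebra ℚ 𝔸 := .restrictScalars ℚ ℝ 𝔸
  rw [integral_eq_sub_of_hasDerivAt
    (fun t _ => hasDerivAt_exp_smul_mul_mul_exp_one_sub_smul a z t)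
    ((by fun_prop : Continuous _).intervalIntegrable 0 1)]
  simp

end RealBanachAlgebra

section CStarRing

variable {𝔸 : Type*} [NormedRing 𝔸] [NormedAlgebra ℝ 𝔸] [CompleteSpace 𝔸] [StarRing 𝔸]
  [CStarRing 𝔸] [StarModule ℝ 𝔸]

theorem exp_smul_mem_unitary_of_mem_skewAdjoint {a : 𝔸} (ha : a ∈ skewAdjoint 𝔸) (t : ℝ) :
    exp (t • a) ∈ unitary 𝔸 :=
  let +nondep : NormedAlgebra ℚ 𝔸 := .restrictScalars ℚ ℝ 𝔸
  exp_mem_unitary_of_mem_skewAdjoint (skewAdjoint.smul_mem t ha)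

theorem norm_integral_exp_smul_mul_mul_exp_one_sub_smul_le {a : 𝔸} (ha : a ∈ skewAdjoint 𝔸)
    (c : 𝔸) : ‖∫ t in (0 : ℝ)..1, exp (t • a) * c * exp ((1 - t) • a)‖ ≤ ‖c‖ := by
  have hconj : ∀ t : ℝ, ‖exp (t • a) * c * exp ((1 - t) • a)‖ = ‖c‖ := fun t => by
    rw [CStarRing.norm_mul_coe_unitary _ ⟨_, exp_smul_mem_unitary_of_mem_skewAdjoint ha (1 - t)⟩,
      CStarRing.norm_coe_unitary_mul ⟨_, exp_smul_mem_unitary_of_mem_skewAdjoint ha t⟩]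
  simpa using norm_integral_le_of_norm_le_const (a := 0) (b := 1) fun t _ => (hconj t).le

theorem norm_exp_mul_sub_mul_exp_le {a : 𝔸} (ha : a ∈ skewAdjoint 𝔸) (z : 𝔸) :
    ‖exp a * z - z * exp a‖ ≤ ‖a * z - z * a‖ := by
  rw [exp_mul_sub_mul_exp_eq_integral]
  exact norm_integral_exp_smul_mul_mul_exp_one_sub_smul_le ha _

end CStarRing

/-- For a bounded self-adjoint operator `x` and an arbitrary bounded operator `z`,
`[e^{ix}, z] = i ∫_0^1 e^{itx} [x,z] e^{i(1-t)x} dt`, and consequently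
`‖[e^{ix}, z]‖ ≤ ‖[x,z]‖`. -/
theorem commutator_exp_bound
    {H : Type*} [NormedAddCommGroup H] [InnerProductSpace ℂ H] [CompleteSpace H]
    (x z : H →L[ℂ] H) (hx : IsSelfAdjoint x) :
    NormedSpace.exp (I • x) * z - z * NormedSpace.exp (I • x) =
      I • ∫ t in (0:ℝ)..1,
        NormedSpace.exp (((t : ℂ) * I) • x) * (x * z - z * x) *
          NormedSpace.exp ((((1 - t : ℝ) : ℂ) * I) • x) ∧
    ‖NormedSpace.exp (I • x) * z - z * NormedSpace.exp (I • x)‖ ≤ ‖x * z - z * x‖ := by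
  have hsmul : ∀ t : ℝ, ((t : ℂ) * I) • x = t • (I • x) := fun t => by
    rw [mul_smul, Complex.coe_smul]
  have hcomm : (I • x) * z - z * (I • x) = I • (x * z - z * x) := by
    rw [smul_mul_assoc, mul_smul_comm, smul_sub]
  refine ⟨?_, ?_⟩
  · rw [exp_mul_sub_mul_exp_eq_integral, hcomm]
    simp only [hsmul, mul_smul_comm, smul_mul_assoc, integral_smul]
  · have := norm_exp_mul_sub_mul_exp_le (hx.smul_mem_skewAdjoint conj_I) z
    rwa [hcomm, norm_smul, norm_I, one_mul] at this
end

section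
/- For q ∈ ℝ³ with q ≠ 0 small, the integral I(q) = ∫_{|k|≤1} dk / (|k+q|² |k|²) diverges like |q|^{-1}: there exist constants 0 < c₁ ≤ c₂ such that c₁ |q|^{-1} ≤ I(q) ≤ c₂ |q|^{-1} for all sufficiently small |q|. -/
/-!
Write `r = ‖q‖ / 2`. Where `‖k‖ ≤ ‖k + q‖`, the triangle inequality forces `‖k + q‖ ≥ r`, so the
kernel is at most `‖k‖⁻² min(r⁻², ‖k‖⁻²)`; symmetrically where `‖k + q‖ ≤ ‖k‖`. In polar coordinates
this radial majorant integrates over all of space to `3|B| (1/r + 1/r)`, `|B|` the volume of the unit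
ball, so `I(q) ≤ 24|B| / ‖q‖`. Conversely, on the ball `‖k‖ < r` we have `‖k + q‖ ≤ 3r`, so the
kernel is at least `(9r²)⁻¹ ‖k‖⁻²`, whose integral over that ball is `(2|B| / 3) / ‖q‖`.
-/

open MeasureTheory Set Metric
open scoped ENNReal

section Radial

variable {E : Type*} [NormedAddCommGroup E] [NormedSpace ℝ E] [FiniteDimensional ℝ E]
  [MeasurableSpace E] [BorelSpace E] [Nontrivial E] (μ : Measure E) [μ.IsAddHaarMeasure]

theorem lintegral_fun_norm_addHaar {g : ℝ → ℝ≥0∞} (hg : Measurable g) :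
    ∫⁻ x, g ‖x‖ ∂μ = Module.finrank ℝ E * μ (ball 0 1) *
      ∫⁻ y in Ioi (0 : ℝ), ENNReal.ofReal (y ^ (Module.finrank ℝ E - 1)) * g y := by
  have hg' : Measurable fun y : Ioi (0 : ℝ) ↦ g y := hg.comp measurable_subtype_coe
  calc ∫⁻ x, g ‖x‖ ∂μ = ∫⁻ x : ({(0)}ᶜ : Set E), g ‖x.1‖ ∂(μ.comap (↑)) := by
        rw [lintegral_subtype_comap (measurableSet_singleton _).compl (fun x ↦ g ‖x‖),
          restrict_compl_singleton]
    _ = ∫⁻ x, g x.2 ∂μ.toSphere.prod (.volumeIoiPow (Module.finrank ℝ E - 1)) := by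
        simpa using (μ.measurePreserving_homeomorphUnitSphereProd.lintegral_comp_emb
          (Homeomorph.measurableEmbedding _) (g ∘ Subtype.val ∘ Prod.snd))
    _ = ∫⁻ _ : sphere (0 : E) 1, ∫⁻ y, g y ∂.volumeIoiPow (Module.finrank ℝ E - 1) ∂μ.toSphere :=
        lintegral_prod _ (hg'.comp measurable_snd).aemeasurable
    _ = μ.toSphere univ * ∫⁻ y : Ioi (0 : ℝ),
          ENNReal.ofReal ((y : ℝ) ^ (Module.finrank ℝ E - 1)) * g y ∂(volume.comap Subtype.val) := by
        rw [lintegral_const, mul_comm, Measure.volumeIoiPow,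
          lintegral_withDensity_eq_lintegral_mul _
            (measurable_subtype_coe.pow_const _).ennreal_ofReal hg']
        rfl
    _ = _ := by
        rw [lintegral_subtype_comap measurableSet_Ioi (fun y ↦ ENNReal.ofReal (y ^ _) * g y),
          μ.toSphere_apply_univ]

theorem setLIntegral_ball_fun_norm_addHaar {g : ℝ → ℝ≥0∞} (hg : Measurable g) (r : ℝ) :
    ∫⁻ x in ball 0 r, g ‖x‖ ∂μ = Module.finrank ℝ E * μ (ball 0 1) *
      ∫⁻ y in Ioo 0 r, ENNReal.ofReal (y ^ (Module.finrank ℝ E - 1)) * g y := by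
  have hball : (ball (0 : E) r).indicator (fun x ↦ g ‖x‖) = fun x ↦ (Iio r).indicator g ‖x‖ := by
    ext x
    simp only [indicator, mem_ball_zero_iff, mem_Iio]
  have hIio : (fun y ↦ ENNReal.ofReal (y ^ (Module.finrank ℝ E - 1)) * (Iio r).indicator g y) =
      (Iio r).indicator fun y ↦ ENNReal.ofReal (y ^ (Module.finrank ℝ E - 1)) * g y := by
    ext y
    simp only [indicator_mul_right]
  rw [← lintegral_indicator measurableSet_ball, hball,
    lintegral_fun_norm_addHaar μ (hg.indicator measurableSet_Iio), hIio,
    lintegral_indicator measurableSet_Iio, Measure.restrict_restrict measurableSet_Iio,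
    Iio_inter_Ioi]

end Radial

theorem lintegral_Ioi_inv_sq {r : ℝ} (hr : 0 < r) :
    ∫⁻ y in Ioi r, ENNReal.ofReal (y ^ 2)⁻¹ = ENNReal.ofReal r⁻¹ := by
  have hpow : EqOn (fun y : ℝ ↦ (y ^ 2)⁻¹) (fun y ↦ y ^ (-2 : ℝ)) (Ioi r) := fun y hy ↦ by
    simp only [Real.rpow_neg (hr.trans hy).le, Real.rpow_two]
  rw [setLIntegral_congr_fun measurableSet_Ioi fun y hy ↦ congrArg ENNReal.ofReal (hpow hy),
    ← ofReal_integral_eq_lintegral_ofReal (integrableOn_Ioi_rpow_of_lt (by norm_num) hr)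
      ((ae_restrict_mem measurableSet_Ioi).mono fun y hy ↦ Real.rpow_nonneg (hr.trans hy).le _),
    integral_Ioi_rpow_of_lt (by norm_num) hr]
  norm_num [Real.rpow_neg_one]

noncomputable def radialMajorant (r t : ℝ) : ℝ := (t ^ 2)⁻¹ * min (r ^ 2)⁻¹ (t ^ 2)⁻¹

theorem radialMajorant_nonneg (r t : ℝ) : 0 ≤ radialMajorant r t := by
  unfold radialMajorant
  positivity

theorem one_div_sq_mul_sq_le_radialMajorant {a b r : ℝ} (ha : 0 ≤ a) (hr : 0 < r) (hab : a ≤ b)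
    (hrb : r ≤ b) : 1 / (b ^ 2 * a ^ 2) ≤ radialMajorant r a := by
  rcases ha.eq_or_lt with rfl | ha
  · simp [radialMajorant]
  rw [radialMajorant, one_div, mul_inv, mul_comm]
  gcongr
  exact le_min (inv_anti₀ (by positivity) (by gcongr)) (inv_anti₀ (by positivity) (by gcongr))

noncomputable def coulombKernel {F : Type*} [SeminormedAddCommGroup F] (q k : F) : ℝ :=
  1 / (‖k + q‖ ^ 2 * ‖k‖ ^ 2)

section Kernel

variable {F : Type*} [SeminormedAddCommGroup F]

theorem coulombKernel_nonneg (q k : F) : 0 ≤ coulombKernel q k := by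
  unfold coulombKernel
  positivity

theorem coulombKernel_le_radialMajorant_add {q : F} (hq : 0 < ‖q‖) (k : F) :
    coulombKernel q k ≤ radialMajorant (‖q‖ / 2) ‖k‖ + radialMajorant (‖q‖ / 2) ‖k + q‖ := by
  have htri := norm_le_add_norm_add' k q
  rcases le_total ‖k‖ ‖k + q‖ with h | h
  · exact (one_div_sq_mul_sq_le_radialMajorant (norm_nonneg _) (by positivity) h
      (by linarith)).trans (le_add_of_nonneg_right (radialMajorant_nonneg _ _))
  · rw [coulombKernel, mul_comm]
    exact (one_div_sq_mul_sq_le_radialMajorant (norm_nonneg _) (by positivity) h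
      (by linarith)).trans (le_add_of_nonneg_left (radialMajorant_nonneg _ _))

theorem inv_mul_inv_norm_sq_le_coulombKernel {q k : F} (hk : ‖k‖ ≤ ‖q‖ / 2) :
    (9 / 4 * ‖q‖ ^ 2)⁻¹ * (‖k‖ ^ 2)⁻¹ ≤ coulombKernel q k := by
  have htri := norm_le_add_norm_add' k q
  rcases (norm_nonneg (k + q)).eq_or_lt with h | h
  · have hq : ‖q‖ = 0 := by linarith [norm_nonneg q]
    simpa [hq] using coulombKernel_nonneg q k
  rw [coulombKernel, one_div, mul_inv (‖k + q‖ ^ 2)]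
  gcongr
  nlinarith [norm_add_le k q, norm_nonneg k]

end Kernel

section ThreeDim

variable {E : Type*} [NormedAddCommGroup E] [NormedSpace ℝ E] [FiniteDimensional ℝ E]
  [MeasurableSpace E] [BorelSpace E] (μ : Measure E) [μ.IsAddHaarMeasure]

omit [BorelSpace E] in
theorem ofReal_three_mul_measureReal_ball_mul (r : ℝ) :
    ENNReal.ofReal (3 * μ.real (ball 0 1) * r) = 3 * μ (ball 0 1) * ENNReal.ofReal r := by
  rw [ENNReal.ofReal_mul (by positivity), ENNReal.ofReal_mul (by norm_num), ofReal_measureReal,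
    ENNReal.ofReal_ofNat]

theorem setLIntegral_ball_inv_norm_sq (hE : Module.finrank ℝ E = 3) (r : ℝ) :
    ∫⁻ x in ball 0 r, ENNReal.ofReal (‖x‖ ^ 2)⁻¹ ∂μ =
      ENNReal.ofReal (3 * μ.real (ball 0 1) * r) := by
  have : Nontrivial E := Module.nontrivial_of_finrank_eq_succ hE
  rw [setLIntegral_ball_fun_norm_addHaar μ (g := fun y ↦ ENNReal.ofReal (y ^ 2)⁻¹) (by fun_prop),
    hE, setLIntegral_congr_fun measurableSet_Ioo (g := fun _ ↦ 1) fun y hy ↦ ?_,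
    setLIntegral_one, Real.volume_Ioo, sub_zero, Nat.cast_ofNat,
    ofReal_three_mul_measureReal_ball_mul]
  rw [show 3 - 1 = 2 from rfl, ← ENNReal.ofReal_mul (by positivity),
    mul_inv_cancel₀ (pow_pos hy.1 2).ne', ENNReal.ofReal_one]

theorem lintegral_radialMajorant_norm (hE : Module.finrank ℝ E = 3) {r : ℝ} (hr : 0 < r) :
    ∫⁻ x, ENNReal.ofReal (radialMajorant r ‖x‖) ∂μ =
      ENNReal.ofReal (3 * μ.real (ball 0 1) * (2 / r)) := by
  have : Nontrivial E := Module.nontrivial_of_finrank_eq_succ hE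
  have hpolar : ∀ y > 0, ENNReal.ofReal (y ^ 2) * ENNReal.ofReal (radialMajorant r y) =
      ENNReal.ofReal (min (r ^ 2)⁻¹ (y ^ 2)⁻¹) := fun y hy ↦ by
    rw [← ENNReal.ofReal_mul (by positivity), radialMajorant, ← mul_assoc,
      mul_inv_cancel₀ (by positivity), one_mul]
  have hnear : ∫⁻ y in Ioc 0 r, ENNReal.ofReal (min (r ^ 2)⁻¹ (y ^ 2)⁻¹) =
      ENNReal.ofReal r⁻¹ := by
    rw [setLIntegral_congr_fun measurableSet_Ioc (g := fun _ ↦ ENNReal.ofReal (r ^ 2)⁻¹)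
      fun y hy ↦ ?_, setLIntegral_const, Real.volume_Ioc, sub_zero,
      ← ENNReal.ofReal_mul (by positivity)]
    · field_simp
    · rw [min_eq_left (inv_anti₀ (pow_pos hy.1 2) (pow_le_pow_left₀ hy.1.le hy.2 2))]
  have hfar : ∫⁻ y in Ioi r, ENNReal.ofReal (min (r ^ 2)⁻¹ (y ^ 2)⁻¹) = ENNReal.ofReal r⁻¹ := by
    rw [setLIntegral_congr_fun measurableSet_Ioi (g := fun y ↦ ENNReal.ofReal (y ^ 2)⁻¹)
      fun y hy ↦ ?_, lintegral_Ioi_inv_sq hr]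
    rw [min_eq_right (inv_anti₀ (pow_pos hr 2) (pow_le_pow_left₀ hr.le (le_of_lt hy) 2))]
  rw [lintegral_fun_norm_addHaar μ (g := fun t ↦ ENNReal.ofReal (radialMajorant r t))
      (by unfold radialMajorant; fun_prop), hE, Nat.cast_ofNat,
    ofReal_three_mul_measureReal_ball_mul, setLIntegral_congr_fun measurableSet_Ioi hpolar,
    ← Ioc_union_Ioi_eq_Ioi hr.le, lintegral_union measurableSet_Ioi Ioc_disjoint_Ioi_same,
    hnear, hfar, ← ENNReal.ofReal_add (by positivity) (by positivity)]
  ring_nf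

theorem lintegral_coulombKernel_le (hE : Module.finrank ℝ E = 3) {q : E} (hq : q ≠ 0) :
    ∫⁻ k, ENNReal.ofReal (coulombKernel q k) ∂μ ≤
      ENNReal.ofReal (24 * μ.real (ball 0 1) / ‖q‖) := by
  have hq' : 0 < ‖q‖ := norm_pos_iff.mpr hq
  set M : E → ℝ≥0∞ := fun k ↦ ENNReal.ofReal (radialMajorant (‖q‖ / 2) ‖k‖)
  have hM : Measurable M := by unfold M radialMajorant; fun_prop
  calc ∫⁻ k, ENNReal.ofReal (coulombKernel q k) ∂μ ≤ ∫⁻ k, (M k + M (k + q)) ∂μ :=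
        lintegral_mono fun k ↦ (ENNReal.ofReal_le_ofReal
          (coulombKernel_le_radialMajorant_add hq' k)).trans ENNReal.ofReal_add_le
    _ = ∫⁻ k, M k ∂μ + ∫⁻ k, M k ∂μ := by
        rw [lintegral_add_left hM, lintegral_add_right_eq_self M q]
    _ = _ := by
        rw [lintegral_radialMajorant_norm μ hE (by positivity),
          ← ENNReal.ofReal_add (by positivity) (by positivity)]
        congr 1
        field_simp
        ring

theorem ofReal_le_setLIntegral_ball_coulombKernel (hE : Module.finrank ℝ E = 3) {q : E}
    (hq : q ≠ 0) (hq₂ : ‖q‖ ≤ 2) :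
    ENNReal.ofReal (2 * μ.real (ball 0 1) / 3 / ‖q‖) ≤
      ∫⁻ k in ball 0 1, ENNReal.ofReal (coulombKernel q k) ∂μ := by
  have hq' : 0 < ‖q‖ := norm_pos_iff.mpr hq
  have hc : (0 : ℝ) ≤ (9 / 4 * ‖q‖ ^ 2)⁻¹ := by positivity
  calc ENNReal.ofReal (2 * μ.real (ball 0 1) / 3 / ‖q‖)
        = ∫⁻ k in ball 0 (‖q‖ / 2), ENNReal.ofReal ((9 / 4 * ‖q‖ ^ 2)⁻¹ * (‖k‖ ^ 2)⁻¹) ∂μ := by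
        simp_rw [ENNReal.ofReal_mul hc]
        rw [lintegral_const_mul' _ _ ENNReal.ofReal_ne_top, setLIntegral_ball_inv_norm_sq μ hE,
          ← ENNReal.ofReal_mul hc]
        congr 1
        field_simp
        ring
    _ ≤ ∫⁻ k in ball 0 (‖q‖ / 2), ENNReal.ofReal (coulombKernel q k) ∂μ :=
        setLIntegral_mono (by unfold coulombKernel; fun_prop) fun k hk ↦ ENNReal.ofReal_le_ofReal
          (inv_mul_inv_norm_sq_le_coulombKernel (mem_ball_zero_iff.mp hk).le)
    _ ≤ _ := lintegral_mono_set (ball_subset_ball (by linarith))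

theorem setIntegral_ball_coulombKernel_bounds (hE : Module.finrank ℝ E = 3) {q : E}
    (hq : q ≠ 0) (hq₂ : ‖q‖ ≤ 2) :
    2 * μ.real (ball 0 1) / 3 / ‖q‖ ≤ ∫ k in ball 0 1, coulombKernel q k ∂μ ∧
      ∫ k in ball 0 1, coulombKernel q k ∂μ ≤ 24 * μ.real (ball 0 1) / ‖q‖ := by
  have hupper :=
    (setLIntegral_le_lintegral (ball 0 1) _).trans (lintegral_coulombKernel_le μ hE hq)
  rw [integral_eq_lintegral_of_nonneg_ae (ae_of_all _ (coulombKernel_nonneg q))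
    (by unfold coulombKernel; fun_prop : Measurable (coulombKernel q)).aestronglyMeasurable]
  exact ⟨(ENNReal.ofReal_le_iff_le_toReal (ne_top_of_le_ne_top ENNReal.ofReal_ne_top hupper)).mp
    (ofReal_le_setLIntegral_ball_coulombKernel μ hE hq hq₂),
    ENNReal.toReal_le_of_le_ofReal (by positivity) hupper⟩

end ThreeDim

/-- The integral `I(q) = ∫_{|k|≤1} dk / (|k+q|² |k|²)` over the unit ball in
`ℝ³` diverges like `|q|⁻¹` as `q → 0`: there are constants `0 < c₁ ≤ c₂` such
that `c₁ |q|⁻¹ ≤ I(q) ≤ c₂ |q|⁻¹` for all sufficiently small nonzero `q`. -/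
theorem coulomb_like_integral_divergence :
    ∃ c₁ c₂ ε : ℝ, 0 < c₁ ∧ c₁ ≤ c₂ ∧ 0 < ε ∧
      ∀ q : EuclideanSpace ℝ (Fin 3), q ≠ 0 → ‖q‖ < ε →
        c₁ / ‖q‖ ≤ (∫ k in Metric.ball (0 : EuclideanSpace ℝ (Fin 3)) 1,
            1 / (‖k + q‖ ^ 2 * ‖k‖ ^ 2)) ∧
        (∫ k in Metric.ball (0 : EuclideanSpace ℝ (Fin 3)) 1,
            1 / (‖k + q‖ ^ 2 * ‖k‖ ^ 2)) ≤ c₂ / ‖q‖ := by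
  set V := (volume : Measure (EuclideanSpace ℝ (Fin 3))).real (ball 0 1)
  have hV : 0 < V := ENNReal.toReal_pos (measure_ball_pos _ _ one_pos).ne' measure_ball_lt_top.ne
  exact ⟨2 * V / 3, 24 * V, 2, by positivity, by linarith, two_pos, fun q hq hq₂ ↦
    setIntegral_ball_coulombKernel_bounds volume finrank_euclideanSpace_fin hq hq₂.le⟩
end
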